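/- arXiv:2509.20826 — 2 statements merged into one kernel-verified Lean document; each statement's English description precedes it below -/
import Mathlib

section
/- In the Lie algebra sl₂(ℂ) with basis X, Y, Z satisfying [X,Y] = X, [Z,Y] = -Z, [X,Z] = 2Y, suppose X = ∂_y and Y = (1/c)∂_x + y∂_y as vector fields on ℂ² (c ∈ ℂ*). Then any vector field Z = P(x,y)∂_x + Q(x,y)∂_y satisfying the bracket relations must have the form Z = (2y/c + c₁e^{cx})∂_x + (y² + c₂e^{2cx})∂_y for constants c₁, c₂ ∈ ℂ; in particular, Z is a rational function of x and y only when c₁ = c₂ = 0. -/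
open Complex ContinuousLinearMap

lemma key_ode (a : ℂ) (R : ℂ × ℂ → ℂ) (hR : Differentiable ℂ R)
    (h1 : ∀ p : ℂ × ℂ, fderiv ℂ R p (1, 0) = a * R p)
    (h2 : ∀ p : ℂ × ℂ, fderiv ℂ R p (0, 1) = 0) :
    ∀ p : ℂ × ℂ, R p = R (0, 0) * Complex.exp (a * p.1) := by
  set L : ℂ × ℂ →L[ℂ] ℂ := (-a) • ContinuousLinearMap.fst ℂ ℂ ℂ with hL
  have he : ∀ p : ℂ × ℂ, HasFDerivAt (fun q : ℂ × ℂ => Complex.exp (-a * q.1))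
      (Complex.exp (-a * p.1) • L) p := by
    intro p
    exact (hasFDerivAt_fst.const_mul (-a)).cexp
  set U : ℂ × ℂ → ℂ := fun q => R q * Complex.exp (-a * q.1) with hUdef
  have hU : ∀ p : ℂ × ℂ, HasFDerivAt U
      (R p • (Complex.exp (-a * p.1) • L) + Complex.exp (-a * p.1) • fderiv ℂ R p) p :=
    fun p => ((hR p).hasFDerivAt).mul (he p)
  have hzero : ∀ p : ℂ × ℂ,
      (R p • (Complex.exp (-a * p.1) • L) + Complex.exp (-a * p.1) • fderiv ℂ R p)
        = (0 : ℂ × ℂ →L[ℂ] ℂ) := by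
    intro p
    apply ContinuousLinearMap.ext
    intro v
    have hv : v = v.1 • ((1 : ℂ), (0 : ℂ)) + v.2 • ((0 : ℂ), (1 : ℂ)) := by
      simp [Prod.ext_iff, Prod.smul_mk]
    have hRv : fderiv ℂ R p v = v.1 * (a * R p) := by
      conv_lhs => rw [hv]
      rw [map_add, map_smul, map_smul, h1 p, h2 p]
      simp [smul_eq_mul]
    have hLv : L v = -a * v.1 := by simp [hL, smul_eq_mul]
    simp only [ContinuousLinearMap.add_apply, ContinuousLinearMap.smul_apply,
      ContinuousLinearMap.zero_apply, smul_eq_mul, hRv, hLv]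
    ring
  have hconst : ∀ p : ℂ × ℂ, U p = U (0, 0) := by
    intro p
    have hdiff : Differentiable ℂ U := fun p => (hU p).differentiableAt
    exact is_const_of_fderiv_eq_zero hdiff
      (fun p => by rw [(hU p).fderiv]; exact hzero p) p (0, 0)
  intro p
  have h := hconst p
  have hU0 : U (0, 0) = R (0, 0) := by simp [hUdef]
  rw [hU0] at h
  rw [← h]
  show R p = R p * Complex.exp (-a * p.1) * Complex.exp (a * p.1)
  rw [neg_mul, Complex.exp_neg]
  field_simp

/-- if `X = ∂_y`, `Y = (1/c)∂_x + y∂_y` and `Z = P∂_x + Q∂_y` is a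
holomorphic vector field on `ℂ²` satisfying the `sl₂` structure equations
`[X,Z] = 2Y` and `[Z,Y] = -Z` (spelled out on components via partial derivatives),
then `Z = (2y/c + c₁e^{cx})∂_x + (y² + c₂e^{2cx})∂_y` for some constants `c₁, c₂`. -/
theorem stmt7 (c : ℂ) (hc : c ≠ 0) (P Q : ℂ × ℂ → ℂ)
    (hP : Differentiable ℂ P) (hQ : Differentiable ℂ Q)
    (hXZ1 : ∀ p : ℂ × ℂ, fderiv ℂ P p (0, 1) = 2 / c)
    (hXZ2 : ∀ p : ℂ × ℂ, fderiv ℂ Q p (0, 1) = 2 * p.2)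
    (hZY1 : ∀ p : ℂ × ℂ,
      -(1 / c) * fderiv ℂ P p (1, 0) - p.2 * fderiv ℂ P p (0, 1) = -P p)
    (hZY2 : ∀ p : ℂ × ℂ,
      Q p - (1 / c) * fderiv ℂ Q p (1, 0) - p.2 * fderiv ℂ Q p (0, 1) = -Q p) :
    ∃ c₁ c₂ : ℂ, ∀ p : ℂ × ℂ,
      P p = 2 * p.2 / c + c₁ * Complex.exp (c * p.1) ∧
      Q p = p.2 ^ 2 + c₂ * Complex.exp (2 * c * p.1) := by
  set R : ℂ × ℂ → ℂ := fun q => P q - 2 * q.2 / c with hRdef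
  have hg : ∀ p : ℂ × ℂ, HasFDerivAt (fun q : ℂ × ℂ => 2 * q.2 / c)
      ((2 / c) • ContinuousLinearMap.snd ℂ ℂ ℂ) p := by
    intro p
    have h2 := (hasFDerivAt_snd (𝕜 := ℂ) (E := ℂ) (F := ℂ) (p := p)).const_mul (2 / c)
    have e1 : (fun q : ℂ × ℂ => 2 * q.2 / c) = fun q : ℂ × ℂ => (2 / c) * q.2 := by
      funext q; ring
    rw [e1]; exact h2
  have hRf : ∀ p : ℂ × ℂ, HasFDerivAt R
      (fderiv ℂ P p - (2 / c) • ContinuousLinearMap.snd ℂ ℂ ℂ) p :=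
    fun p => ((hP p).hasFDerivAt).sub (hg p)
  have hRdiff : Differentiable ℂ R := fun p => (hRf p).differentiableAt
  have hRfd : ∀ p : ℂ × ℂ, fderiv ℂ R p
      = fderiv ℂ P p - (2 / c) • ContinuousLinearMap.snd ℂ ℂ ℂ :=
    fun p => (hRf p).fderiv
  have hR1 : ∀ p : ℂ × ℂ, fderiv ℂ R p (1, 0) = c * R p := by
    intro p
    have h := hZY1 p
    rw [hXZ1 p] at h
    have happ : fderiv ℂ R p (1, 0) = fderiv ℂ P p (1, 0) := by
      rw [hRfd p]; simp
    have key : fderiv ℂ P p (1, 0) = c * P p - 2 * p.2 := by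
      have h2 : c * fderiv ℂ P p (1, 0) = c * (c * P p - 2 * p.2) := by
        field_simp at h
        linear_combination -c * h
      exact mul_left_cancel₀ hc h2
    rw [happ, key, hRdef]
    field_simp
  have hR2 : ∀ p : ℂ × ℂ, fderiv ℂ R p (0, 1) = 0 := by
    intro p
    rw [hRfd p]
    simp [hXZ1 p, smul_eq_mul]
  have hPkey := key_ode c R hRdiff hR1 hR2
  set T : ℂ × ℂ → ℂ := fun q => Q q - q.2 ^ 2 with hTdef
  have hs : ∀ p : ℂ × ℂ, HasFDerivAt (fun q : ℂ × ℂ => q.2 ^ 2)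
      ((2 * p.2) • ContinuousLinearMap.snd ℂ ℂ ℂ) p := by
    intro p
    have h2 := (hasFDerivAt_snd (𝕜 := ℂ) (E := ℂ) (F := ℂ) (p := p)).mul
      (hasFDerivAt_snd (𝕜 := ℂ) (E := ℂ) (F := ℂ) (p := p))
    have e1 : (fun q : ℂ × ℂ => q.2 ^ 2) = fun q : ℂ × ℂ => q.2 * q.2 := by
      funext q; ring
    have e2 : (2 * p.2) • ContinuousLinearMap.snd ℂ ℂ ℂ
        = p.2 • ContinuousLinearMap.snd ℂ ℂ ℂ + p.2 • ContinuousLinearMap.snd ℂ ℂ ℂ := by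
      rw [two_mul]; exact add_smul p.2 p.2 (ContinuousLinearMap.snd ℂ ℂ ℂ)
    rw [e1, e2]; exact h2
  have hTf : ∀ p : ℂ × ℂ, HasFDerivAt T
      (fderiv ℂ Q p - (2 * p.2) • ContinuousLinearMap.snd ℂ ℂ ℂ) p :=
    fun p => ((hQ p).hasFDerivAt).sub (hs p)
  have hTdiff : Differentiable ℂ T := fun p => (hTf p).differentiableAt
  have hT1 : ∀ p : ℂ × ℂ, fderiv ℂ T p (1, 0) = 2 * c * T p := by
    intro p
    have h := hZY2 p
    rw [hXZ2 p] at h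
    have happ : fderiv ℂ T p (1, 0) = fderiv ℂ Q p (1, 0) := by
      rw [(hTf p).fderiv]; simp
    rw [happ, hTdef]
    field_simp at h
    linear_combination -h
  have hT2 : ∀ p : ℂ × ℂ, fderiv ℂ T p (0, 1) = 0 := by
    intro p
    rw [(hTf p).fderiv]
    simp [hXZ2 p, smul_eq_mul]
  have hQkey := key_ode (2 * c) T hTdiff hT1 hT2
  refine ⟨R (0, 0), T (0, 0), fun p => ⟨?_, ?_⟩⟩
  · have := hPkey p
    simp only [hRdef] at this ⊢
    linear_combination this
  · have := hQkey p
    simp only [hTdef] at this ⊢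
    linear_combination this
end

section
/- Let X = ∂_y and Y = (x/λ)∂_x + y∂_y be vector fields on ℂ² with λ ∈ ℂ*. Any vector field Z = P∂_x + Q∂_y satisfying [X,Y] = X, [Z,Y] = -Z, [X,Z] = 2Y has the form Z = (2xy/λ + c₁x^{λ+1})∂_x + (y² + c₂x^{2λ})∂_y for some constants c₁, c₂ ∈ ℂ. -/
open Complex

lemma slitPlane_preconnected : IsPreconnected Complex.slitPlane := by
  apply isPreconnected_of_forall (1 : ℂ)
  intro z hz
  exact ⟨segment ℝ 1 z, starConvex_one_slitPlane.segment_subset hz,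
    left_mem_segment _ _ _, right_mem_segment _ _ _,
    (convex_segment _ _).isPreconnected⟩

/-- Solving `x f'(x) = a f(x)` on the slit plane gives `f x = c * x ^ a`. -/
lemma ode_solve (a : ℂ) (f f' : ℂ → ℂ)
    (hd : ∀ x ∈ Complex.slitPlane, HasDerivAt f (f' x) x)
    (hode : ∀ x ∈ Complex.slitPlane, x * f' x = a * f x) :
    ∃ c : ℂ, ∀ x ∈ Complex.slitPlane, f x = c * x ^ a := by
  set h : ℂ → ℂ := fun x => f x * Complex.exp (-(a * Complex.log x)) with hh_def
  have hh : ∀ x ∈ Complex.slitPlane, HasDerivAt h 0 x := by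
    intro x hx
    have hx0 : x ≠ 0 := slitPlane_ne_zero hx
    have hlog : HasDerivAt Complex.log x⁻¹ x := Complex.hasDerivAt_log hx
    have h1 : HasDerivAt (fun x => -(a * Complex.log x)) (-(a * x⁻¹)) x :=
      (hlog.const_mul a).neg
    have h2 : HasDerivAt (fun x => Complex.exp (-(a * Complex.log x)))
        (Complex.exp (-(a * Complex.log x)) * -(a * x⁻¹)) x := h1.cexp
    have h3 := (hd x hx).mul h2
    refine h3.congr_deriv ?_
    have hfe : f' x = a * f x / x := by
      rw [eq_div_iff hx0]
      linear_combination hode x hx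
    rw [hfe]
    field_simp
    ring
  have hdiff : DifferentiableOn ℂ h Complex.slitPlane :=
    fun x hx => ((hh x hx).differentiableAt).differentiableWithinAt
  have hanal : AnalyticOnNhd ℂ h Complex.slitPlane :=
    hdiff.analyticOnNhd isOpen_slitPlane
  -- h is constant near 1 (on the unit ball around 1, which is convex and in slitPlane)
  have hball : Metric.ball (1 : ℂ) 1 ⊆ Complex.slitPlane := by
    intro z hz
    rw [Metric.mem_ball] at hz
    rw [Complex.mem_slitPlane_iff]
    left
    have : |z.re - 1| < 1 := by
      calc |z.re - 1| = |(z - 1).re| := by simp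
        _ ≤ ‖z - 1‖ := Complex.abs_re_le_norm _
        _ < 1 := by rwa [Complex.dist_eq] at hz
    have := abs_lt.mp this
    linarith [this.1]
  have hconst_ball : ∀ z ∈ Metric.ball (1 : ℂ) 1, h z = h 1 := by
    intro z hz
    have hconv : Convex ℝ (Metric.ball (1 : ℂ) 1) := convex_ball _ _
    refine hconv.is_const_of_fderivWithin_eq_zero
      (fun x hx => ((hh x (hball hx)).differentiableAt).differentiableWithinAt)
      (fun x hx => ?_) hz (Metric.mem_ball_self one_pos)
    rw [fderivWithin_of_isOpen Metric.isOpen_ball hx]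
    have := (hh x (hball hx)).hasFDerivAt
    rw [this.fderiv]
    ext v
    simp
  have heq : Set.EqOn h (fun _ => h 1) Complex.slitPlane := by
    apply hanal.eqOn_of_preconnected_of_eventuallyEq
      (analyticOnNhd_const) slitPlane_preconnected
      (Complex.one_mem_slitPlane)
    filter_upwards [Metric.ball_mem_nhds (1 : ℂ) one_pos] with z hz
    exact hconst_ball z hz
  refine ⟨h 1, fun x hx => ?_⟩
  have hx0 : x ≠ 0 := slitPlane_ne_zero hx
  have := heq hx
  have hfx : f x = h 1 * Complex.exp (a * Complex.log x) := by
    have h1' : f x * Complex.exp (-(a * Complex.log x)) * Complex.exp (a * Complex.log x)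
        = h 1 * Complex.exp (a * Complex.log x) := by
      have hx' : f x * Complex.exp (-(a * Complex.log x)) = h 1 := this
      rw [hx']
    rwa [mul_assoc, ← Complex.exp_add, neg_add_cancel, Complex.exp_zero, mul_one] at h1'
  rw [hfx, Complex.cpow_def_of_ne_zero hx0, mul_comm (Complex.log x) a]

/-- if `X = ∂_y`, `Y = (x/λ)∂_x + y∂_y` and `Z = P∂_x + Q∂_y` satisfies the
`sl₂` structure equations `[X,Z] = 2Y` and `[Z,Y] = -Z` (spelled out on components, on the
domain where `x` lies in the slit plane so that `x^λ` makes sense), then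
`Z = (2xy/λ + c₁x^{λ+1})∂_x + (y² + c₂x^{2λ})∂_y` for some constants `c₁, c₂`. -/
theorem stmt8 (l : ℂ) (hl : l ≠ 0) (P Q : ℂ × ℂ → ℂ)
    (hPd : ∀ p : ℂ × ℂ, p.1 ∈ Complex.slitPlane → DifferentiableAt ℂ P p)
    (hQd : ∀ p : ℂ × ℂ, p.1 ∈ Complex.slitPlane → DifferentiableAt ℂ Q p)
    (hXZ1 : ∀ p : ℂ × ℂ, p.1 ∈ Complex.slitPlane → fderiv ℂ P p (0, 1) = 2 * p.1 / l)
    (hXZ2 : ∀ p : ℂ × ℂ, p.1 ∈ Complex.slitPlane → fderiv ℂ Q p (0, 1) = 2 * p.2)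
    (hZY1 : ∀ p : ℂ × ℂ, p.1 ∈ Complex.slitPlane →
      P p * (1 / l) - (p.1 / l * fderiv ℂ P p (1, 0) + p.2 * fderiv ℂ P p (0, 1)) = -P p)
    (hZY2 : ∀ p : ℂ × ℂ, p.1 ∈ Complex.slitPlane →
      Q p - (p.1 / l * fderiv ℂ Q p (1, 0) + p.2 * fderiv ℂ Q p (0, 1)) = -Q p) :
    ∃ c₁ c₂ : ℂ, ∀ p : ℂ × ℂ, p.1 ∈ Complex.slitPlane →
      P p = 2 * p.1 * p.2 / l + c₁ * p.1 ^ (l + 1) ∧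
      Q p = p.2 ^ 2 + c₂ * p.1 ^ (2 * l) := by
  -- partial derivatives in the `y` direction, as genuine derivatives
  have hPy : ∀ x ∈ Complex.slitPlane, ∀ y : ℂ,
      HasDerivAt (fun y => P (x, y)) (fderiv ℂ P (x, y) (0, 1)) y := by
    intro x hx y
    have hin : HasDerivAt (fun y : ℂ => ((x : ℂ), y)) ((0 : ℂ), (1 : ℂ)) y :=
      (hasDerivAt_const y x).prodMk (hasDerivAt_id y)
    exact ((hPd (x, y) hx).hasFDerivAt).comp_hasDerivAt y hin
  have hQy : ∀ x ∈ Complex.slitPlane, ∀ y : ℂ,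
      HasDerivAt (fun y => Q (x, y)) (fderiv ℂ Q (x, y) (0, 1)) y := by
    intro x hx y
    have hin : HasDerivAt (fun y : ℂ => ((x : ℂ), y)) ((0 : ℂ), (1 : ℂ)) y :=
      (hasDerivAt_const y x).prodMk (hasDerivAt_id y)
    exact ((hQd (x, y) hx).hasFDerivAt).comp_hasDerivAt y hin
  -- Step A : P (x, y) = 2 x y / l + P (x, 0)
  have hPform : ∀ x ∈ Complex.slitPlane, ∀ y : ℂ,
      P (x, y) = 2 * x * y / l + P (x, 0) := by
    intro x hx y
    have hF : ∀ y : ℂ, HasDerivAt (fun y => P (x, y) - 2 * x * y / l) 0 y := by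
      intro y
      have h1 : HasDerivAt (fun y => P (x, y)) (2 * x / l) y := by
        have := hPy x hx y
        rwa [hXZ1 (x, y) hx] at this
      have h2 : HasDerivAt (fun y : ℂ => 2 * x * y / l) (2 * x / l) y := by
        simpa using ((hasDerivAt_id y).const_mul (2 * x)).div_const l
      exact (h1.sub h2).congr_deriv (sub_self _)
    have := is_const_of_deriv_eq_zero (f := fun y => P (x, y) - 2 * x * y / l)
      (fun y => (hF y).differentiableAt) (fun y => (hF y).deriv) y 0
    simp only [mul_zero, zero_div] at this
    linear_combination this
  -- Step A' : Q (x, y) = y ^ 2 + Q (x, 0)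
  have hQform : ∀ x ∈ Complex.slitPlane, ∀ y : ℂ,
      Q (x, y) = y ^ 2 + Q (x, 0) := by
    intro x hx y
    have hF : ∀ y : ℂ, HasDerivAt (fun y => Q (x, y) - y ^ 2) 0 y := by
      intro y
      have h1 : HasDerivAt (fun y => Q (x, y)) (2 * y) y := by
        have := hQy x hx y
        rwa [hXZ2 (x, y) hx] at this
      have h2 : HasDerivAt (fun y : ℂ => y ^ 2) (2 * y) y := by
        simpa [mul_comm] using (hasDerivAt_pow 2 y)
      exact (h1.sub h2).congr_deriv (sub_self _)
    have := is_const_of_deriv_eq_zero (f := fun y => Q (x, y) - y ^ 2)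
      (fun y => (hF y).differentiableAt) (fun y => (hF y).deriv) y 0
    simp only [ne_eq, OfNat.ofNat_ne_zero, not_false_eq_true, zero_pow, sub_zero] at this
    linear_combination this
  -- the functions of x alone
  set f : ℂ → ℂ := fun x => P (x, 0) with hf_def
  set g : ℂ → ℂ := fun x => Q (x, 0) with hg_def
  -- their derivatives
  have hfd : ∀ x ∈ Complex.slitPlane, HasDerivAt f (fderiv ℂ P (x, 0) (1, 0)) x := by
    intro x hx
    have hin : HasDerivAt (fun x : ℂ => (x, (0 : ℂ))) ((1 : ℂ), (0 : ℂ)) x :=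
      (hasDerivAt_id x).prodMk (hasDerivAt_const x 0)
    exact ((hPd (x, 0) hx).hasFDerivAt).comp_hasDerivAt x hin
  have hgd : ∀ x ∈ Complex.slitPlane, HasDerivAt g (fderiv ℂ Q (x, 0) (1, 0)) x := by
    intro x hx
    have hin : HasDerivAt (fun x : ℂ => (x, (0 : ℂ))) ((1 : ℂ), (0 : ℂ)) x :=
      (hasDerivAt_id x).prodMk (hasDerivAt_const x 0)
    exact ((hQd (x, 0) hx).hasFDerivAt).comp_hasDerivAt x hin
  -- the ODEs
  have hfode : ∀ x ∈ Complex.slitPlane,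
      x * fderiv ℂ P (x, 0) (1, 0) = (l + 1) * f x := by
    intro x hx
    have E := hZY1 (x, 0) hx
    simp only at E
    field_simp [hl] at E
    linear_combination -E
  have hgode : ∀ x ∈ Complex.slitPlane,
      x * fderiv ℂ Q (x, 0) (1, 0) = (2 * l) * g x := by
    intro x hx
    have E := hZY2 (x, 0) hx
    simp only at E
    field_simp [hl] at E
    linear_combination -E
  obtain ⟨c₁, hc₁⟩ := ode_solve (l + 1) f _ hfd hfode
  obtain ⟨c₂, hc₂⟩ := ode_solve (2 * l) g _ hgd hgode
  refine ⟨c₁, c₂, fun p hp => ⟨?_, ?_⟩⟩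
  · have := hPform p.1 hp p.2
    rw [this, show P (p.1, 0) = c₁ * p.1 ^ (l + 1) from hc₁ p.1 hp]
  · have := hQform p.1 hp p.2
    rw [this, show Q (p.1, 0) = c₂ * p.1 ^ (2 * l) from hc₂ p.1 hp]
end
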